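/- arXiv:2602.13981 — 2 statements merged into one kernel-verified Lean document; each statement's English description precedes it below -/
import Mathlib

section
/- Let I = (G, 𝐓, W, k) be a tuple where G = (V,E) is a finite simple undirected graph, 𝐓 is a finite set of pairs of vertices, W ⊆ V is a vertex multicut of (G,𝐓), k is an integer, and let X be a shadowless solution of I. Then: (1) for any v ∈ X, the set X ∖ {v} is a shadowless solution of (G − {v}, 𝐓 − {v}, W, k−1); (2) for any v ∈ V ∖ (W ∪ X), X is a shadowless solution of torso(I, {v}); and (3) for any Z ⊆ V ∖ W and map f : Z → W, if X ∩ Z = ∅ and every v ∈ Z lies in the same connected component as f(v) in G − X, then X is a shadowless solution of contract(I, f). -/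
open scoped Classical

variable {V : Type*} [Fintype V] [DecidableEq V]

/-- The graph `G − X`: the graph obtained from `G` by deleting the vertices of `X`
(encoded on the same vertex type: vertices of `X` become isolated). -/
def removeVerts (G : SimpleGraph V) (X : Set V) : SimpleGraph V where
  Adj u v := G.Adj u v ∧ u ∉ X ∧ v ∉ X
  symm := by constructor; rintro u v ⟨h, hu, hv⟩; exact ⟨h.symm, hv, hu⟩
  loopless := by constructor; rintro v ⟨h, -, -⟩; exact G.loopless.irrefl v h

/-- The open neighborhood `N(C)` of a vertex set `C`. -/
def nbhd (G : SimpleGraph V) (C : Set V) : Set V :=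
  {v | v ∉ C ∧ ∃ u ∈ C, G.Adj u v}

/-- `X` is a vertex multicut of `(G, Pairs)`. -/
def IsMulticut (G : SimpleGraph V) (Pairs : Set (V × V)) (X : Set V) : Prop :=
  ∀ p ∈ Pairs, ¬ (removeVerts G X).Reachable p.1 p.2

/-- A solution of the Vertex Multicut Compression instance `(G, Pairs, W, k)`. -/
def IsSolution (G : SimpleGraph V) (Pairs : Set (V × V)) (W : Set V) (k : ℕ)
    (X : Set V) : Prop :=
  X.ncard ≤ k ∧ IsMulticut G Pairs X ∧ Disjoint X W ∧
    ∀ w₁ ∈ W, ∀ w₂ ∈ W, w₁ ≠ w₂ → ¬ (removeVerts G X).Reachable w₁ w₂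

/-- `u` and `v` are connected by a `Z`-path in `G` (a path whose internal vertices lie in `Z`). -/
def ZPathConn (G : SimpleGraph V) (Z : Set V) (u v : V) : Prop :=
  ∃ p : G.Walk u v, ∀ x ∈ p.support, x = u ∨ x = v ∨ x ∈ Z

/-- The torso graph: vertex set `V ∖ Z` (vertices of `Z` become isolated), with an edge
between distinct `u, v ∉ Z` whenever they are connected by a `Z`-path in `G`. -/
def torsoGraph (G : SimpleGraph V) (Z : Set V) : SimpleGraph V where
  Adj u v := u ≠ v ∧ u ∉ Z ∧ v ∉ Z ∧ ZPathConn G Z u v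
  symm := by
    constructor
    rintro u v ⟨hne, hu, hv, p, hp⟩
    refine ⟨hne.symm, hv, hu, p.reverse, ?_⟩
    intro x hx
    rw [SimpleGraph.Walk.support_reverse, List.mem_reverse] at hx
    rcases hp x hx with h | h | h
    · exact Or.inr (Or.inl h)
    · exact Or.inl h
    · exact Or.inr (Or.inr h)
  loopless := by constructor; rintro v ⟨hne, -⟩; exact hne rfl

/-- `φ(v)`: for `v ∈ Z`, the set of vertices of `V ∖ Z` connected to `v` by a `Z`-path;
for `v ∉ Z`, the singleton `{v}`. -/
def phi (G : SimpleGraph V) (Z : Set V) (v : V) : Set V :=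
  {u | (v ∈ Z ∧ u ∉ Z ∧ ZPathConn G Z v u) ∨ (v ∉ Z ∧ u = v)}

/-- The terminal pairs of the torso instance. -/
def torsoPairs (G : SimpleGraph V) (Z : Set V) (Pairs : Set (V × V)) : Set (V × V) :=
  {q | ∃ p ∈ Pairs, q.1 ∈ phi G Z p.1 ∧ q.2 ∈ phi G Z p.2}

/-- `f*`: the extension of `f : Z → W` by the identity on `V ∖ Z`. -/
noncomputable def fStar (Z : Set V) (f : V → V) (v : V) : V :=
  if v ∈ Z then f v else v

/-- The contracted graph: vertex set `V ∖ Z` (vertices of `Z` become isolated), with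
edge set `{(f*(u), f*(v)) : (u,v) ∈ E, f*(u) ≠ f*(v)}`. -/
def contractGraph (G : SimpleGraph V) (Z : Set V) (f : V → V) : SimpleGraph V where
  Adj a b := a ≠ b ∧ ∃ u v, G.Adj u v ∧ a = fStar Z f u ∧ b = fStar Z f v
  symm := by
    constructor
    rintro a b ⟨hne, u, v, h, ha, hb⟩
    exact ⟨hne.symm, v, u, h.symm, hb, ha⟩
  loopless := by constructor; rintro a ⟨hne, -⟩; exact hne rfl

/-- The terminal pairs of the contracted instance. -/
def contractPairs (Z : Set V) (f : V → V) (Pairs : Set (V × V)) : Set (V × V) :=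
  {q | ∃ p ∈ Pairs, q = (fStar Z f p.1, fStar Z f p.2)}

/-- `X` is shadowless on the vertex universe `U`: every vertex of `U ∖ X` is connected to `W`
in `G − X` (i.e. every connected component of `G − X` contains a vertex of `W`). -/
def IsShadowlessOn (G : SimpleGraph V) (U W X : Set V) : Prop :=
  ∀ v ∈ U \ X, ∃ w ∈ W, (removeVerts G X).Reachable v w


set_option linter.unusedSectionVars false
set_option maxHeartbeats 1000000

private lemma reachable_of_adj_reachable {G H : SimpleGraph V}
    (h : ∀ a b, G.Adj a b → H.Reachable a b) {a b : V} (hr : G.Reachable a b) :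
    H.Reachable a b := by
  obtain ⟨p⟩ := hr
  induction p with
  | nil => exact SimpleGraph.Reachable.refl _
  | cons h' p ih => exact (h _ _ h').trans ih

private lemma reachable_remove_of_walk {G : SimpleGraph V} {X : Set V} {a b : V}
    (p : G.Walk a b) (h : ∀ x ∈ p.support, x ∉ X) :
    (removeVerts G X).Reachable a b := by
  induction p with
  | nil => exact SimpleGraph.Reachable.refl _
  | @cons u c w h' q ih =>
    have ha : (removeVerts G X).Adj u c := ⟨h', h u (by simp), h c (by simp)⟩
    exact ha.reachable.trans (ih fun x hx => h x (by simp [hx]))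

private lemma isolated_reach {G : SimpleGraph V} {X : Set V} {a b : V} (ha : a ∈ X)
    (h : (removeVerts G X).Reachable a b) : a = b := by
  obtain ⟨p⟩ := h
  cases p with
  | nil => rfl
  | cons h' q => exact absurd ha h'.2.1

private lemma remove_remove {G : SimpleGraph V} {X : Set V} {v : V} (hv : v ∈ X) :
    removeVerts (removeVerts G {v}) (X \ {v}) = removeVerts G X := by
  ext a b
  show (G.Adj a b ∧ a ∉ ({v} : Set V) ∧ b ∉ ({v} : Set V)) ∧ a ∉ X \ {v} ∧ b ∉ X \ {v} ↔
    G.Adj a b ∧ a ∉ X ∧ b ∉ X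
  simp only [Set.mem_diff, Set.mem_singleton_iff]
  constructor
  · rintro ⟨⟨h, ha, hb⟩, ha2, hb2⟩
    exact ⟨h, fun hx => ha2 ⟨hx, ha⟩, fun hx => hb2 ⟨hx, hb⟩⟩
  · rintro ⟨h, ha, hb⟩
    exact ⟨⟨h, fun e => ha (e ▸ hv), fun e => hb (e ▸ hv)⟩,
      fun hx => ha hx.1, fun hx => hb hx.1⟩

/-- A `{v}`-path from `v` to `s' ≠ v` yields an edge `v s'`. -/
private lemma zpath_adj {G : SimpleGraph V} {v s' : V} (hne : v ≠ s')
    (h : ZPathConn G {v} v s') : G.Adj v s' := by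
  obtain ⟨p, hp⟩ := h
  cases p with
  | nil => exact absurd rfl hne
  | @cons _ c _ h' q =>
    rcases hp c (by simp) with rfl | rfl | hc
    · exact absurd rfl h'.ne
    · exact h'
    · rw [Set.mem_singleton_iff] at hc; exact absurd hc.symm h'.ne

private lemma phi_reach {G : SimpleGraph V} {X : Set V} {v s s' : V} (hvX : v ∉ X)
    (hs'X : s' ∉ X) (h : s' ∈ phi G {v} s) : (removeVerts G X).Reachable s s' := by
  rcases h with ⟨hsZ, hs'Z, p, hp⟩ | ⟨hsZ, rfl⟩
  · rw [Set.mem_singleton_iff] at hsZ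
    subst hsZ
    refine reachable_remove_of_walk p fun x hx => ?_
    rcases hp x hx with rfl | rfl | hc
    · exact hvX
    · exact hs'X
    · rw [Set.mem_singleton_iff] at hc; exact hc ▸ hvX
  · exact SimpleGraph.Reachable.refl _

private lemma torso_adj_reach {G : SimpleGraph V} {X : Set V} {v : V} (hvX : v ∉ X)
    {a b : V} (h : (removeVerts (torsoGraph G {v}) X).Adj a b) :
    (removeVerts G X).Reachable a b := by
  obtain ⟨⟨hne, ha1, hb1, p, hp⟩, haX, hbX⟩ := h
  refine reachable_remove_of_walk p fun x hx => ?_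
  rcases hp x hx with rfl | rfl | hc
  · exact haX
  · exact hbX
  · rw [Set.mem_singleton_iff] at hc; exact hc ▸ hvX

private lemma torso_reach {G : SimpleGraph V} {X : Set V} {v : V} (hvX : v ∉ X) :
    ∀ n {a b : V} (p : (removeVerts G X).Walk a b), p.length ≤ n →
      a ≠ v → b ≠ v → (removeVerts (torsoGraph G {v}) X).Reachable a b := by
  intro n
  induction n with
  | zero =>
    intro a b p hp ha hb
    cases p with
    | nil => exact SimpleGraph.Reachable.refl _
    | cons h q => simp [SimpleGraph.Walk.length_cons] at hp
  | succ n ih =>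
    intro a b p hp ha hb
    cases p with
    | nil => exact SimpleGraph.Reachable.refl _
    | @cons _ c _ h q =>
      by_cases hc : c = v
      · subst hc
        cases q with
        | nil => exact absurd rfl hb
        | @cons _ d _ h2 r =>
          have hd : d ≠ c := fun e => (e ▸ h2.1).ne rfl
          have hr : r.length ≤ n := by
            simp only [SimpleGraph.Walk.length_cons] at hp; omega
          by_cases had : a = d
          · subst had; exact ih r hr ha hb
          · have hadj : (removeVerts (torsoGraph G {c}) X).Adj a d := by
              refine ⟨⟨had, ha, hd, SimpleGraph.Walk.cons h.1 (SimpleGraph.Walk.cons h2.1 SimpleGraph.Walk.nil), ?_⟩, h.2.1, h2.2.2⟩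
              intro x hx
              simp only [SimpleGraph.Walk.support_cons, SimpleGraph.Walk.support_nil,
                List.mem_cons, List.mem_singleton] at hx
              rcases hx with rfl | rfl | rfl | hx
              · exact Or.inl rfl
              · exact Or.inr (Or.inr rfl)
              · exact Or.inr (Or.inl rfl)
              · simp at hx
            exact hadj.reachable.trans (ih r hr hd hb)
      · have hadj : (removeVerts (torsoGraph G {v}) X).Adj a c := by
          refine ⟨⟨h.1.ne, ha, hc, SimpleGraph.Walk.cons h.1 SimpleGraph.Walk.nil, ?_⟩, h.2.1, h.2.2⟩
          intro x hx
          simp only [SimpleGraph.Walk.support_cons, SimpleGraph.Walk.support_nil,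
            List.mem_cons, List.mem_singleton] at hx
          rcases hx with rfl | rfl | hx
          · exact Or.inl rfl
          · exact Or.inr (Or.inl rfl)
          · simp at hx
        have hq : q.length ≤ n := by
          simp only [SimpleGraph.Walk.length_cons] at hp; omega
        exact hadj.reachable.trans (ih q hq hc hb)

private lemma contract_push {G : SimpleGraph V} {X Z W : Set V} {f : V → V}
    (hfW : ∀ v ∈ Z, f v ∈ W) (hXW : Disjoint X W) {a b : V}
    (p : (removeVerts G X).Walk a b) :
    (removeVerts (contractGraph G Z f) X).Reachable (fStar Z f a) (fStar Z f b) := by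
  have hnX : ∀ u : V, u ∉ X → fStar Z f u ∉ X := by
    intro u hu
    unfold fStar
    split
    · exact fun hx => Set.disjoint_left.mp hXW hx (hfW u (by assumption))
    · exact hu
  induction p with
  | nil => exact SimpleGraph.Reachable.refl _
  | @cons u c w h q ih =>
    refine SimpleGraph.Reachable.trans ?_ ih
    by_cases he : fStar Z f u = fStar Z f c
    · rw [he]
    · exact SimpleGraph.Adj.reachable
        ⟨⟨he, u, c, h.1, rfl, rfl⟩, hnX u h.2.1, hnX c h.2.2⟩

theorem tests : True := trivial

/-- A shadowless solution `X` remains a shadowless solution after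
(1) deleting a vertex `v ∈ X` (with budget `k − 1`), (2) taking the torso at a vertex
`v ∉ W ∪ X`, and (3) contracting a set `Z` disjoint from `X` each of whose vertices is
connected to its image `f v ∈ W` in `G − X`. -/

theorem shadowless_solution_preservation
    (G : SimpleGraph V) (Pairs : Set (V × V)) (W : Set V) (k : ℕ)
    (hW : IsMulticut G Pairs W)
    (X : Set V) (hX : IsSolution G Pairs W k X)
    (hsl : IsShadowlessOn G Set.univ W X) :
    (∀ v ∈ X,
      IsSolution (removeVerts G {v}) {p ∈ Pairs | p.1 ≠ v ∧ p.2 ≠ v} W (k - 1) (X \ {v}) ∧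
      IsShadowlessOn (removeVerts G {v}) {v}ᶜ W (X \ {v})) ∧
    (∀ v, v ∉ W → v ∉ X →
      IsSolution (torsoGraph G {v}) (torsoPairs G {v} Pairs) W k X ∧
      IsShadowlessOn (torsoGraph G {v}) {v}ᶜ W X) ∧
    (∀ (Z : Set V) (f : V → V), Disjoint Z W → (∀ v ∈ Z, f v ∈ W) →
      X ∩ Z = ∅ → (∀ v ∈ Z, (removeVerts G X).Reachable v (f v)) →
      IsSolution (contractGraph G Z f) (contractPairs Z f Pairs) W k X ∧
      IsShadowlessOn (contractGraph G Z f) Zᶜ W X) := by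
  obtain ⟨hcard, hmc, hdisj, hwsep⟩ := hX
  refine ⟨?_, ?_, ?_⟩
  · -- Part 1: vertex deletion
    intro v hv
    have hE := remove_remove (G := G) (X := X) hv
    have hvne : ∀ u : V, u ∈ ({v}ᶜ : Set V) → u ∉ X \ {v} → u ∉ X := by
      intro u hu1 hu2 hx
      exact hu2 ⟨hx, fun e => hu1 (Set.mem_singleton_iff.mpr (Set.mem_singleton_iff.mp e))⟩
    refine ⟨⟨?_, ?_, ?_, ?_⟩, ?_⟩
    · rw [Set.ncard_diff_singleton_of_mem hv]
      omega
    · intro p hp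
      rw [hE]
      exact hmc p hp.1
    · exact Set.disjoint_of_subset_left Set.diff_subset hdisj
    · intro w1 h1 w2 h2 hne
      rw [hE]
      exact hwsep w1 h1 w2 h2 hne
    · intro u hu
      have huX : u ∉ X := hvne u hu.1 hu.2
      obtain ⟨w, hw, hr⟩ := hsl u ⟨trivial, huX⟩
      exact ⟨w, hw, hE ▸ hr⟩
  · -- Part 2: torso
    intro v hvW hvX
    have reachA : ∀ {a b : V}, (removeVerts (torsoGraph G {v}) X).Reachable a b →
        (removeVerts G X).Reachable a b :=
      fun hr => reachable_of_adj_reachable (fun a b h => torso_adj_reach hvX h) hr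
    refine ⟨⟨hcard, ?_, hdisj, ?_⟩, ?_⟩
    · have key : ∀ s t s' : V, (s, t) ∈ Pairs → s' ∈ X →
          s' ∈ phi G {v} s → s' ∈ phi G {v} t → False := by
        intro s t s' hst hs'X hs' ht'
        rcases hs' with ⟨hsZ, hs'Z, hzp⟩ | ⟨hsZ, he1⟩ <;>
          rcases ht' with ⟨htZ, ht'Z, htzp⟩ | ⟨htZ, he2⟩
        · rw [Set.mem_singleton_iff] at hsZ htZ
          rw [hsZ, htZ] at hst
          exact hmc (v, v) hst (SimpleGraph.Reachable.refl v)
        · rw [Set.mem_singleton_iff] at hsZ hs'Z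
          rw [hsZ] at hzp
          have hadj : G.Adj v s' := zpath_adj (fun e => hs'Z e.symm) hzp
          refine hW (s, t) hst ?_
          show (removeVerts G W).Reachable s t
          rw [hsZ, ← he2]
          have hadjW : (removeVerts G W).Adj v s' :=
            ⟨hadj, hvW, fun hw => Set.disjoint_left.mp hdisj hs'X hw⟩
          exact hadjW.reachable
        · rw [Set.mem_singleton_iff] at htZ ht'Z
          rw [htZ] at htzp
          have hadj : G.Adj v s' := zpath_adj (fun e => ht'Z e.symm) htzp
          refine hW (s, t) hst ?_
          show (removeVerts G W).Reachable s t
          rw [htZ, ← he1]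
          have hadjW : (removeVerts G W).Adj v s' :=
            ⟨hadj, hvW, fun hw => Set.disjoint_left.mp hdisj hs'X hw⟩
          exact hadjW.symm.reachable
        · refine hmc (s, t) hst ?_
          show (removeVerts G X).Reachable s t
          rw [← he1, ← he2]
      rintro ⟨s', t'⟩ ⟨⟨s, t⟩, hst, hs', ht'⟩ hr
      dsimp only at hs' ht' hr
      by_cases hs'X : s' ∈ X
      · obtain rfl := isolated_reach hs'X hr
        exact key s t s' hst hs'X hs' ht'
      · by_cases ht'X : t' ∈ X
        · obtain rfl := isolated_reach ht'X hr.symm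
          exact absurd ht'X hs'X
        · have h1 : (removeVerts G X).Reachable s s' := phi_reach hvX hs'X hs'
          have h2 : (removeVerts G X).Reachable t t' := phi_reach hvX ht'X ht'
          exact hmc (s, t) hst (h1.trans ((reachA hr).trans h2.symm))
    · intro w1 h1 w2 h2 hne hr
      exact hwsep w1 h1 w2 h2 hne (reachA hr)
    · intro u hu
      obtain ⟨w, hw, hr⟩ := hsl u ⟨trivial, hu.2⟩
      obtain ⟨p⟩ := hr
      refine ⟨w, hw, torso_reach hvX p.length p le_rfl ?_ ?_⟩
      · exact fun e => hu.1 (Set.mem_singleton_iff.mpr e)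
      · exact fun e => hvW (e ▸ hw)
  · -- Part 3: contraction
    intro Z f hZW hfW hXZ hreach
    have hZX : ∀ z ∈ Z, z ∉ X :=
      fun z hz hx => Set.eq_empty_iff_forall_notMem.mp hXZ z ⟨hx, hz⟩
    have fstar_reach : ∀ u : V, (removeVerts G X).Reachable u (fStar Z f u) := by
      intro u
      unfold fStar
      split
      · exact hreach u (by assumption)
      · exact SimpleGraph.Reachable.refl _
    have fstar_eq : ∀ u : V, u ∉ Z → fStar Z f u = u := fun u hu => if_neg hu
    have keyC : ∀ a b : V, (removeVerts (contractGraph G Z f) X).Adj a b →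
        (removeVerts G X).Reachable a b := by
      rintro a b ⟨⟨hne, u, c, huc, rfl, rfl⟩, haX, hbX⟩
      have huX : u ∉ X := by
        by_cases h : u ∈ Z
        · exact hZX u h
        · exact (fstar_eq u h) ▸ haX
      have hcX : c ∉ X := by
        by_cases h : c ∈ Z
        · exact hZX c h
        · exact (fstar_eq c h) ▸ hbX
      have hadjX : (removeVerts G X).Adj u c := ⟨huc, huX, hcX⟩
      exact (fstar_reach u).symm.trans (hadjX.reachable.trans (fstar_reach c))
    have reachC : ∀ {a b : V}, (removeVerts (contractGraph G Z f) X).Reachable a b →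
        (removeVerts G X).Reachable a b := fun hr => reachable_of_adj_reachable keyC hr
    refine ⟨⟨hcard, ?_, hdisj, ?_⟩, ?_⟩
    · rintro ⟨a, b⟩ ⟨⟨s, t⟩, hst, heq⟩ hr
      rw [Prod.mk.injEq] at heq
      obtain ⟨rfl, rfl⟩ := heq
      exact hmc (s, t) hst
        ((fstar_reach s).trans ((reachC hr).trans (fstar_reach t).symm))
    · intro w1 h1 w2 h2 hne hr
      exact hwsep w1 h1 w2 h2 hne (reachC hr)
    · intro u hu
      obtain ⟨w, hw, hr⟩ := hsl u ⟨trivial, hu.2⟩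
      obtain ⟨p⟩ := hr
      have := contract_push (W := W) hfW hdisj p
      rw [fstar_eq u hu.1, fstar_eq w (fun hz => Set.disjoint_left.mp hZW hz hw)] at this
      exact ⟨w, hw, this⟩
end

section
/- Let G = (V,E) be a finite simple undirected graph and W ⊆ V such that the multiway-cut LP for (G,W) is feasible. (1) Let v ∈ V ∖ W be a non-zero vertex and let G′ be the graph with vertex set V ∖ {v} and an edge between u₁, u₂ ∈ V ∖ {v} whenever u₁ and u₂ are connected by a {v}-path in G (i.e., the torso of G at V ∖ {v}). Then OPT_lp(G′,W) ≥ OPT_lp(G,W) + 1/2. (2) Let v ∈ V ∖ W be any vertex and w ∈ W, and let G′ be the graph obtained from G by contracting v into w (vertex set V ∖ {v}, with every edge (u,v) of G replaced by the edge (u,w) when u ≠ w). Then OPT_lp(G′,W) ≥ OPT_lp(G,W). -/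
open scoped Classical

variable {V : Type*} [Fintype V] [DecidableEq V]

open scoped ENNReal

/-- A simple path of `G` connecting two distinct vertices of `W`. -/
structure WPath {V : Type*} (G : SimpleGraph V) (W : Set V) where
  a : V
  b : V
  ha : a ∈ W
  hb : b ∈ W
  hne : a ≠ b
  walk : G.Walk a b
  ispath : walk.IsPath

/-- The objective value `∑_{v ∈ V ∖ W} d_v` of the multiway-cut LP. -/
noncomputable def LPObj (W : Set V) (d : V → ℝ≥0∞) : ℝ≥0∞ :=
  ∑ v ∈ Finset.univ.filter (fun v => v ∉ W), d v

/-- Feasibility for the multiway-cut LP: `∑_{v ∈ V(P) ∖ W} d_v ≥ 1` for every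
simple path `P` connecting two distinct vertices of `W`. -/
def LPFeasible (G : SimpleGraph V) (W : Set V) (d : V → ℝ≥0∞) : Prop :=
  ∀ P : WPath G W,
    1 ≤ ∑ v ∈ Finset.univ.filter (fun v => v ∈ P.walk.support ∧ v ∉ W), d v

/-- The optimal value of the multiway-cut LP (`⊤` if the LP is infeasible). -/
noncomputable def OPTlp (G : SimpleGraph V) (W : Set V) : ℝ≥0∞ :=
  ⨅ (d : V → ℝ≥0∞) (_ : LPFeasible G W d), LPObj W d

/-- An optimal solution of the multiway-cut LP. -/
def IsOptimalLP (G : SimpleGraph V) (W : Set V) (d : V → ℝ≥0∞) : Prop :=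
  LPFeasible G W d ∧ LPObj W d = OPTlp G W

/-- A non-zero vertex: a vertex `v ∈ V ∖ W` such that every optimal LP solution
assigns it a positive value. -/
def NonZeroVertex (G : SimpleGraph V) (W : Set V) (v : V) : Prop :=
  v ∉ W ∧ ∀ d, IsOptimalLP G W d → d v ≠ 0

/-- A `{w}`–`(W ∖ {w})` separator: `X ⊆ V ∖ W` whose removal disconnects `w` from
every other vertex of `W`. -/
def IsIsolSep (G : SimpleGraph V) (W : Set V) (w : V) (X : Set V) : Prop :=
  Disjoint X W ∧ ∀ w' ∈ W, w' ≠ w → ¬ (removeVerts G X).Reachable w w'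

/-- `mincut(G, w, W ∖ {w})`: the minimum size of a `{w}`–`(W ∖ {w})` separator. -/
noncomputable def mincutIso (G : SimpleGraph V) (W : Set V) (w : V) : ℕ :=
  sInf {n | ∃ X, IsIsolSep G W w X ∧ X.ncard = n}

set_option linter.unusedSectionVars false
namespace MWC
open SimpleGraph

variable {V : Type*} [Fintype V] [DecidableEq V]

/-- sum of `d` over non-terminal support vertices of a walk -/
noncomputable def psum (W : Set V) (d : V → ℝ≥0∞) {G : SimpleGraph V} {a b : V}
    (p : G.Walk a b) : ℝ≥0∞ :=
  ∑ x ∈ Finset.univ.filter (fun x => x ∈ p.support ∧ x ∉ W), d x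

lemma feas_iff {G : SimpleGraph V} {W : Set V} {d : V → ℝ≥0∞} :
    LPFeasible G W d ↔ ∀ P : WPath G W, 1 ≤ psum W d P.walk := Iff.rfl

lemma psum_mono_support {G G' : SimpleGraph V} {W : Set V} {d : V → ℝ≥0∞}
    {a b a' b' : V} {p : G.Walk a b} {q : G'.Walk a' b'}
    (h : ∀ x ∈ q.support, x ∈ p.support) : psum W d q ≤ psum W d p := by
  apply Finset.sum_le_sum_of_subset
  intro x hx
  rw [Finset.mem_filter] at hx ⊢
  exact ⟨hx.1, h x hx.2.1, hx.2.2⟩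

lemma opt_le {G : SimpleGraph V} {W : Set V} {d : V → ℝ≥0∞} (h : LPFeasible G W d) :
    OPTlp G W ≤ LPObj W d := by
  exact iInf₂_le d h

lemma le_opt {G : SimpleGraph V} {W : Set V} {c : ℝ≥0∞}
    (h : ∀ d, LPFeasible G W d → c ≤ LPObj W d) : c ≤ OPTlp G W :=
  le_iInf₂ h

lemma feasible_of_opt_ne_top {G : SimpleGraph V} {W : Set V} (h : OPTlp G W ≠ ⊤) :
    ∃ d, LPFeasible G W d := by
  by_contra hc
  push_neg at hc
  apply h
  simp only [OPTlp]
  rw [iInf_eq_top]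
  intro d
  rw [iInf_eq_top]
  intro hd
  exact absurd hd (hc d)

lemma opt_ne_top {G : SimpleGraph V} {W : Set V} (hFeas : ∃ d, LPFeasible G W d) :
    OPTlp G W ≠ ⊤ := by
  obtain ⟨d, hd⟩ := hFeas
  have hones : LPFeasible G W (fun _ => 1) := by
    intro P
    have h1 := hd P
    have hne : (Finset.univ.filter (fun x => x ∈ P.walk.support ∧ x ∉ W)).Nonempty := by
      by_contra hc
      rw [Finset.not_nonempty_iff_eq_empty] at hc
      rw [hc] at h1
      simp at h1
    rw [Finset.sum_const, nsmul_eq_mul, mul_one]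
    exact_mod_cast Nat.one_le_cast.mpr (Finset.card_pos.mpr hne)
  have := opt_le hones
  apply ne_top_of_le_ne_top _ this
  simp only [LPObj, Finset.sum_const, nsmul_eq_mul, mul_one]
  exact ENNReal.natCast_ne_top _

lemma exists_optimal {G : SimpleGraph V} {W : Set V} (hFeas : ∃ d, LPFeasible G W d) :
    ∃ d, LPFeasible G W d ∧ LPObj W d = OPTlp G W := by
  obtain ⟨d1, hd1⟩ := hFeas
  have hcl : IsClosed {d : V → ℝ≥0∞ | LPFeasible G W d} := by
    have : {d : V → ℝ≥0∞ | LPFeasible G W d} =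
        ⋂ P : WPath G W, {d : V → ℝ≥0∞ |
          1 ≤ ∑ x ∈ Finset.univ.filter (fun x => x ∈ P.walk.support ∧ x ∉ W), d x} := by
      ext d
      simp only [Set.mem_iInter, Set.mem_setOf_eq]
      rfl
    rw [this]
    refine isClosed_iInter fun P => ?_
    exact isClosed_le continuous_const
      (continuous_finset_sum _ fun i _ => continuous_apply i)
  have hcont : Continuous (fun d : V → ℝ≥0∞ => LPObj W d) :=
    continuous_finset_sum _ fun i _ => continuous_apply i
  obtain ⟨d0, hd0, hmin⟩ := hcl.isCompact.exists_isMinOn ⟨d1, hd1⟩ hcont.continuousOn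
  refine ⟨d0, hd0, le_antisymm ?_ (opt_le hd0)⟩
  exact le_opt fun d hd => hmin hd

lemma cap_feasible {G : SimpleGraph V} {W : Set V} {d : V → ℝ≥0∞} (hd : LPFeasible G W d) :
    LPFeasible G W (fun x => if x ∈ W then 0 else min (d x) 1) := by
  intro P
  set F := Finset.univ.filter (fun x => x ∈ P.walk.support ∧ x ∉ W) with hF
  by_cases h1 : ∃ x ∈ F, (1 : ℝ≥0∞) ≤ d x
  · obtain ⟨x, hxF, hx1⟩ := h1
    have hxW : x ∉ W := by
      rw [hF, Finset.mem_filter] at hxF; exact hxF.2.2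
    calc (1:ℝ≥0∞) = (if x ∈ W then 0 else min (d x) 1) := by
          rw [if_neg hxW, min_eq_right hx1]
      _ ≤ _ := Finset.single_le_sum (f := fun x => if x ∈ W then 0 else min (d x) 1) (fun i _ => zero_le) hxF
  · push_neg at h1
    have : ∀ x ∈ F, (if x ∈ W then 0 else min (d x) 1) = d x := by
      intro x hxF
      have hxW : x ∉ W := by rw [hF, Finset.mem_filter] at hxF; exact hxF.2.2
      rw [if_neg hxW, min_eq_left (le_of_lt (h1 x hxF))]
    rw [Finset.sum_congr rfl this]
    exact hd P

lemma cap_obj_le {W : Set V} {d : V → ℝ≥0∞} :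
    LPObj W (fun x => if x ∈ W then 0 else min (d x) 1) ≤ LPObj W d := by
  apply Finset.sum_le_sum
  intro x hx
  rw [Finset.mem_filter] at hx
  rw [if_neg hx.2]
  exact min_le_left _ _

end MWC
namespace MWC
open SimpleGraph

variable {V : Type*} [Fintype V] [DecidableEq V]

/-- set of weights of clean walks from `w` to `u` -/
def rhoSet (G : SimpleGraph V) (W : Set V) (d : V → ℝ≥0∞) (w u : V) : Set ℝ≥0∞ :=
  {r | ∃ p : G.Walk w u, (∀ x ∈ p.support, x ∈ W → x = w ∨ x = u) ∧ psum W d p = r}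

/-- distance from terminal `w` to `u` along walks internally avoiding `W` -/
noncomputable def rho (G : SimpleGraph V) (W : Set V) (d : V → ℝ≥0∞) (w u : V) : ℝ≥0∞ :=
  sInf (rhoSet G W d w u)

variable {G : SimpleGraph V} {W : Set V} {d : V → ℝ≥0∞}

lemma rho_le {w u : V} (p : G.Walk w u)
    (hc : ∀ x ∈ p.support, x ∈ W → x = w ∨ x = u) : rho G W d w u ≤ psum W d p :=
  sInf_le ⟨p, hc, rfl⟩

lemma rho_attained {w u : V} (h : rho G W d w u ≠ ⊤) :
    ∃ p : G.Walk w u, (∀ x ∈ p.support, x ∈ W → x = w ∨ x = u) ∧ psum W d p = rho G W d w u := by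
  have hfin : (rhoSet G W d w u).Finite := by
    apply Set.Finite.subset
      (Finset.finite_toSet ((Finset.univ.powerset).image (fun s : Finset V => ∑ x ∈ s, d x)))
    rintro r ⟨p, _, rfl⟩
    simp only [Finset.coe_image, Set.mem_image, Finset.mem_coe, Finset.mem_powerset]
    exact ⟨_, Finset.subset_univ _, rfl⟩
  have hne : (rhoSet G W d w u).Nonempty := by
    by_contra hc
    rw [Set.not_nonempty_iff_eq_empty] at hc
    exact h (by rw [rho, hc, sInf_empty])
  exact hne.csInf_mem hfin

lemma rho_self {w : V} (hw : w ∈ W) : rho G W d w w = 0 := by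
  apply le_antisymm _ (zero_le)
  have : psum W d (SimpleGraph.Walk.nil : G.Walk w w) = 0 := by
    apply Finset.sum_eq_zero
    intro x hx
    rw [Finset.mem_filter] at hx
    simp only [SimpleGraph.Walk.support_nil, List.mem_singleton] at hx
    exact absurd (hx.2.1 ▸ hw) hx.2.2
  rw [← this]
  exact rho_le _ (fun x hx _ => by
    simp only [SimpleGraph.Walk.support_nil, List.mem_singleton] at hx; exact Or.inl hx)

lemma rho_ge {w u : V} (hu : u ∉ W) : d u ≤ rho G W d w u := by
  apply le_sInf
  rintro r ⟨p, _, rfl⟩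
  exact Finset.single_le_sum (f := d) (fun i _ => zero_le)
    (Finset.mem_filter.mpr ⟨Finset.mem_univ _, p.end_mem_support, hu⟩)

lemma rho_triangle {w z c : V} (hz : z ∉ W ∨ z = w) (hadj : G.Adj z c) :
    rho G W d w c ≤ rho G W d w z + d c := by
  by_cases hzt : rho G W d w z = ⊤
  · rw [hzt]; simp
  obtain ⟨p, hc, hp⟩ := rho_attained hzt
  have hq : ∀ x ∈ (p.concat hadj).support, x ∈ W → x = w ∨ x = c := by
    intro x hx hxW
    rw [SimpleGraph.Walk.support_concat, List.mem_append, List.mem_singleton] at hx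
    rcases hx with hx | rfl
    · rcases hc x hx hxW with h | rfl
      · exact Or.inl h
      · rcases hz with hz | rfl
        · exact absurd hxW hz
        · exact Or.inl rfl
    · exact Or.inr rfl
  have hle : psum W d (p.concat hadj) ≤ psum W d p + d c := by
    have hsub : Finset.univ.filter (fun x => x ∈ (p.concat hadj).support ∧ x ∉ W) ⊆
        insert c (Finset.univ.filter (fun x => x ∈ p.support ∧ x ∉ W)) := by
      intro x hx
      rw [Finset.mem_filter] at hx
      rw [SimpleGraph.Walk.support_concat, List.mem_append, List.mem_singleton] at hx
      rcases hx.2.1 with h | rfl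
      · exact Finset.mem_insert_of_mem (Finset.mem_filter.mpr ⟨hx.1, h, hx.2.2⟩)
      · exact Finset.mem_insert_self _ _
    calc psum W d (p.concat hadj)
        ≤ ∑ x ∈ insert c (Finset.univ.filter (fun x => x ∈ p.support ∧ x ∉ W)), d x :=
          Finset.sum_le_sum_of_subset hsub
      _ ≤ psum W d p + d c := by
          by_cases hcmem : c ∈ Finset.univ.filter (fun x => x ∈ p.support ∧ x ∉ W)
          · rw [Finset.insert_eq_self.mpr hcmem]; exact le_self_add
          · rw [Finset.sum_insert hcmem, add_comm]
            exact le_rfl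
  calc rho G W d w c ≤ psum W d (p.concat hadj) := rho_le _ hq
    _ ≤ psum W d p + d c := hle
    _ = rho G W d w z + d c := by rw [hp]

lemma rho_terminal (hfeas : LPFeasible G W d) {w w' : V} (hw : w ∈ W) (hw' : w' ∈ W)
    (hne : w ≠ w') : 1 ≤ rho G W d w w' := by
  apply le_sInf
  rintro r ⟨p, _, rfl⟩
  have h1 : 1 ≤ psum W d p.bypass := hfeas ⟨w, w', hw, hw', hne, p.bypass, p.bypass_isPath⟩
  exact h1.trans (psum_mono_support fun x hx => p.support_bypass_subset hx)

lemma rho_constraint (hfeas : LPFeasible G W d) {w w' u : V} (hw : w ∈ W) (hw' : w' ∈ W)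
    (hne : w ≠ w') (hu : u ∉ W) (h1 : rho G W d w u ≠ ⊤) (h2 : rho G W d w' u ≠ ⊤) :
    1 + d u ≤ rho G W d w u + rho G W d w' u := by
  obtain ⟨p, hpc, hp⟩ := rho_attained h1
  obtain ⟨q, hqc, hq⟩ := rho_attained h2
  set r := (p.append q.reverse).bypass with hr
  have hsup : ∀ x ∈ r.support, x ∈ p.support ∨ x ∈ q.support := by
    intro x hx
    have := (p.append q.reverse).support_bypass_subset hx
    rw [SimpleGraph.Walk.support_append] at this
    rcases List.mem_append.mp this with h | h
    · exact Or.inl h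
    · have := List.mem_of_mem_tail h
      rw [SimpleGraph.Walk.support_reverse, List.mem_reverse] at this
      exact Or.inr this
  have hfr : 1 ≤ psum W d r :=
    hfeas ⟨w, w', hw, hw', hne, r, (p.append q.reverse).bypass_isPath⟩
  set A := Finset.univ.filter (fun x => x ∈ p.support ∧ x ∉ W) with hA
  set B := Finset.univ.filter (fun x => x ∈ q.support ∧ x ∉ W) with hB
  have hFsub : Finset.univ.filter (fun x => x ∈ r.support ∧ x ∉ W) ⊆ A ∪ B := by
    intro x hx
    rw [Finset.mem_filter] at hx
    rw [Finset.mem_union, hA, hB, Finset.mem_filter, Finset.mem_filter]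
    rcases hsup x hx.2.1 with h | h
    · exact Or.inl ⟨hx.1, h, hx.2.2⟩
    · exact Or.inr ⟨hx.1, h, hx.2.2⟩
  have huAB : u ∈ A ∩ B := by
    rw [Finset.mem_inter, hA, hB, Finset.mem_filter, Finset.mem_filter]
    exact ⟨⟨Finset.mem_univ _, p.end_mem_support, hu⟩, ⟨Finset.mem_univ _, q.end_mem_support, hu⟩⟩
  calc 1 + d u ≤ psum W d r + d u := add_le_add_left hfr _
    _ ≤ (∑ x ∈ A ∪ B, d x) + (∑ x ∈ A ∩ B, d x) := by
        apply add_le_add (Finset.sum_le_sum_of_subset hFsub)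
        exact Finset.single_le_sum (f := d) (fun i _ => zero_le) huAB
    _ = (∑ x ∈ A, d x) + (∑ x ∈ B, d x) := Finset.sum_union_inter
    _ = rho G W d w u + rho G W d w' u := by rw [hA, hB] at *; rw [← hp, ← hq]; rfl

lemma rho_cross {w : V} (τ : ℝ≥0∞) :
    ∀ {z y : V} (p : G.Walk z y), (z ∉ W ∨ z = w) → rho G W d w z ≤ τ →
      τ < rho G W d w y → (∀ x ∈ p.support, x ∈ W → x = w ∨ τ < rho G W d w x) →
      ∃ x ∈ p.support, rho G W d w x - d x ≤ τ ∧ τ < rho G W d w x := by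
  intro z y p
  induction p with
  | nil =>
    intro _ h1 h2 _
    exact absurd h2 (not_lt.mpr h1)
  | @cons z c y h p ih =>
    intro hz hzτ hyτ hsup
    have hcsup : c ∈ (SimpleGraph.Walk.cons h p).support := by
      rw [SimpleGraph.Walk.support_cons]
      exact List.mem_cons_of_mem _ p.start_mem_support
    by_cases hc : rho G W d w c ≤ τ
    · have hcW : c ∉ W ∨ c = w := by
        by_cases hcw : c ∈ W
        · rcases hsup c hcsup hcw with hcw' | hlt
          · exact Or.inr hcw'
          · exact absurd hc (not_le.mpr hlt)
        · exact Or.inl hcw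
      obtain ⟨x, hx, hprop⟩ := ih hcW hc hyτ (fun x hx hxW =>
        hsup x (by rw [SimpleGraph.Walk.support_cons]; exact List.mem_cons_of_mem _ hx) hxW)
      exact ⟨x, by rw [SimpleGraph.Walk.support_cons]; exact List.mem_cons_of_mem _ hx, hprop⟩
    · push_neg at hc
      refine ⟨c, hcsup, ?_, hc⟩
      have htri := rho_triangle (d := d) hz h
      exact tsub_le_iff_right.mpr (htri.trans (add_le_add_left hzτ _))

end MWC
namespace MWC
open SimpleGraph

variable {V : Type*} [Fintype V] [DecidableEq V]

/-- condition: `u` lies on the level-`τ` cut around terminal `w` -/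
def Jcond (G : SimpleGraph V) (W : Set V) (d : V → ℝ≥0∞) (τ : ℝ≥0∞) (w u : V) : Prop :=
  rho G W d w u - d u ≤ τ ∧ τ < rho G W d w u

/-- the rounded half-integral solution at level `τ` -/
noncomputable def Dfun (G : SimpleGraph V) (W : Set V) (d : V → ℝ≥0∞) (τ : ℝ≥0∞) (u : V) :
    ℝ≥0∞ :=
  (if ∃ w ∈ W, Jcond G W d τ w u then 2⁻¹ else 0) +
  (if ∃ w ∈ W, ∃ w' ∈ W, w ≠ w' ∧ Jcond G W d τ w u ∧ Jcond G W d τ w' u then 2⁻¹ else 0)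

variable {G : SimpleGraph V} {W : Set V} {d : V → ℝ≥0∞} {τ : ℝ≥0∞}

lemma Dfun_ge_half {u : V} (h : ∃ w ∈ W, Jcond G W d τ w u) : 2⁻¹ ≤ Dfun G W d τ u := by
  rw [Dfun, if_pos h]; exact le_self_add

lemma Dfun_eq_one {u : V} (h : ∃ w ∈ W, ∃ w' ∈ W, w ≠ w' ∧ Jcond G W d τ w u ∧ Jcond G W d τ w' u) :
    Dfun G W d τ u = 1 := by
  obtain ⟨w, hw, w', hw', hne, h1, h2⟩ := h
  rw [Dfun, if_pos ⟨w, hw, h1⟩, if_pos ⟨w, hw, w', hw', hne, h1, h2⟩,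
    ENNReal.inv_two_add_inv_two]

lemma Dfun_exists_nat {u : V} : ∃ k : ℕ, k ≤ 2 ∧ Dfun G W d τ u = (k : ℝ≥0∞) * 2⁻¹ := by
  rw [Dfun]
  split_ifs
  · refine ⟨2, le_rfl, ?_⟩
    rw [ENNReal.inv_two_add_inv_two]
    rw [show ((2:ℕ):ℝ≥0∞) = 2 by norm_num, ENNReal.mul_inv_cancel (by norm_num) (by norm_num)]
  · exact ⟨1, by norm_num, by norm_num⟩
  · exact ⟨1, by norm_num, by norm_num⟩
  · exact ⟨0, by norm_num, by norm_num⟩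

lemma half_lt_one : (2⁻¹ : ℝ≥0∞) < 1 := by
  exact ENNReal.inv_lt_one.mpr (by norm_num)

/-- Feasibility of the rounded solution. -/
lemma Dfun_feasible (hd : LPFeasible G W d) (hdW : ∀ x ∈ W, d x = 0) (hτ : τ < 2⁻¹) :
    LPFeasible G W (Dfun G W d τ) := by
  rw [feas_iff]
  suffices H : ∀ n (P : WPath G W), P.walk.length = n → 1 ≤ psum W (Dfun G W d τ) P.walk by
    exact fun P => H _ P rfl
  intro n
  induction n using Nat.strong_induction_on with
  | _ n ih =>
  intro P hlen
  by_cases hclean : ∀ x ∈ P.walk.support, x ∈ W → x = P.a ∨ x = P.b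
  · -- clean path: crossing argument
    have hτ1 : τ < 1 := hτ.trans half_lt_one
    have hab : (1:ℝ≥0∞) ≤ rho G W d P.a P.b := rho_terminal hd P.ha P.hb P.hne
    have hba : (1:ℝ≥0∞) ≤ rho G W d P.b P.a := rho_terminal hd P.hb P.ha P.hne.symm
    obtain ⟨x₁, hx₁sup, hx₁⟩ := rho_cross (w := P.a) τ P.walk (Or.inr rfl)
      (by rw [rho_self P.ha]; exact zero_le) (lt_of_lt_of_le hτ1 hab)
      (by
        intro x hx hxW
        rcases hclean x hx hxW with rfl | rfl
        · exact Or.inl rfl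
        · exact Or.inr (lt_of_lt_of_le hτ1 hab))
    obtain ⟨x₂, hx₂sup', hx₂⟩ := rho_cross (w := P.b) τ P.walk.reverse (Or.inr rfl)
      (by rw [rho_self P.hb]; exact zero_le) (lt_of_lt_of_le hτ1 hba)
      (by
        intro x hx hxW
        rw [SimpleGraph.Walk.support_reverse, List.mem_reverse] at hx
        rcases hclean x hx hxW with rfl | rfl
        · exact Or.inr (lt_of_lt_of_le hτ1 hba)
        · exact Or.inl rfl)
    have hx₂sup : x₂ ∈ P.walk.support := by
      rwa [SimpleGraph.Walk.support_reverse, List.mem_reverse] at hx₂sup'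
    -- crossing vertices are not terminals
    have hnotW : ∀ x ∈ P.walk.support, rho G W d P.a x - d x ≤ τ → τ < rho G W d P.a x →
        x ∉ W := by
      intro x hx h1 h2 hxW
      rcases hclean x hx hxW with rfl | rfl
      · rw [rho_self P.ha] at h2; exact absurd h2 (by simp)
      · rw [hdW _ hxW, tsub_zero] at h1
        exact absurd (hab.trans h1) (by exact not_le.mpr hτ1)
    have hnotW' : ∀ x ∈ P.walk.support, rho G W d P.b x - d x ≤ τ → τ < rho G W d P.b x →
        x ∉ W := by
      intro x hx h1 h2 hxW
      rcases hclean x hx hxW with rfl | rfl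
      · rw [hdW _ hxW, tsub_zero] at h1
        exact absurd (hba.trans h1) (by exact not_le.mpr hτ1)
      · rw [rho_self P.hb] at h2; exact absurd h2 (by simp)
    have hx₁W : x₁ ∉ W := hnotW x₁ hx₁sup hx₁.1 hx₁.2
    have hx₂W : x₂ ∉ W := hnotW' x₂ hx₂sup hx₂.1 hx₂.2
    have hx₁mem : x₁ ∈ Finset.univ.filter (fun x => x ∈ P.walk.support ∧ x ∉ W) :=
      Finset.mem_filter.mpr ⟨Finset.mem_univ _, hx₁sup, hx₁W⟩
    have hx₂mem : x₂ ∈ Finset.univ.filter (fun x => x ∈ P.walk.support ∧ x ∉ W) :=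
      Finset.mem_filter.mpr ⟨Finset.mem_univ _, hx₂sup, hx₂W⟩
    by_cases hxx : x₁ = x₂
    · subst hxx
      have h1 : Dfun G W d τ x₁ = 1 :=
        Dfun_eq_one ⟨P.a, P.ha, P.b, P.hb, P.hne, hx₁, hx₂⟩
      calc (1:ℝ≥0∞) = Dfun G W d τ x₁ := h1.symm
        _ ≤ _ := Finset.single_le_sum (f := Dfun G W d τ) (fun i _ => zero_le) hx₁mem
    · have hpair : ({x₁, x₂} : Finset V) ⊆
          Finset.univ.filter (fun x => x ∈ P.walk.support ∧ x ∉ W) := by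
        intro x hx
        rcases Finset.mem_insert.mp hx with rfl | hx
        · exact hx₁mem
        · rw [Finset.mem_singleton] at hx; subst hx; exact hx₂mem
      calc (1:ℝ≥0∞) = 2⁻¹ + 2⁻¹ := ENNReal.inv_two_add_inv_two.symm
        _ ≤ Dfun G W d τ x₁ + Dfun G W d τ x₂ :=
            add_le_add (Dfun_ge_half ⟨P.a, P.ha, hx₁⟩) (Dfun_ge_half ⟨P.b, P.hb, hx₂⟩)
        _ = ∑ x ∈ ({x₁, x₂} : Finset V), Dfun G W d τ x := (Finset.sum_pair hxx).symm
        _ ≤ _ := Finset.sum_le_sum_of_subset hpair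
  · -- reduce to a shorter terminal-to-terminal subpath
    push_neg at hclean
    obtain ⟨x, hxsup, hxW, hxa, hxb⟩ := hclean
    have hlt : (P.walk.takeUntil x hxsup).length < n := by
      have hspec := P.walk.take_spec hxsup
      have : (P.walk.takeUntil x hxsup).length + (P.walk.dropUntil x hxsup).length = n := by
        rw [← hlen, ← SimpleGraph.Walk.length_append, hspec]
      have hd0 : (P.walk.dropUntil x hxsup).length ≠ 0 := by
        intro h0
        exact hxb (SimpleGraph.Walk.eq_of_length_eq_zero h0)
      omega
    have := ih _ hlt ⟨P.a, x, P.ha, hxW, fun h => hxa h.symm, P.walk.takeUntil x hxsup,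
      P.ispath.takeUntil hxsup⟩ rfl
    exact this.trans (psum_mono_support fun y hy => P.walk.support_takeUntil_subset hxsup hy)

end MWC
namespace MWC
open SimpleGraph MeasureTheory

variable {V : Type*} [Fintype V] [DecidableEq V]
variable {G : SimpleGraph V} {W : Set V} {d : V → ℝ≥0∞}

/-- realized single-terminal cut region (in real time parameter) -/
def S1 (G : SimpleGraph V) (W : Set V) (d : V → ℝ≥0∞) (u : V) : Set ℝ :=
  {t | ∃ w ∈ W, Jcond G W d (ENNReal.ofReal t) w u}

def S2 (G : SimpleGraph V) (W : Set V) (d : V → ℝ≥0∞) (u : V) : Set ℝ :=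
  {t | ∃ w ∈ W, ∃ w' ∈ W, w ≠ w' ∧ Jcond G W d (ENNReal.ofReal t) w u ∧
    Jcond G W d (ENNReal.ofReal t) w' u}

lemma Jset_meas (w u : V) : MeasurableSet {t : ℝ | Jcond G W d (ENNReal.ofReal t) w u} := by
  have h : {t : ℝ | Jcond G W d (ENNReal.ofReal t) w u}
      = ENNReal.ofReal ⁻¹' (Set.Ico (rho G W d w u - d u) (rho G W d w u)) := rfl
  rw [h]
  exact ENNReal.measurable_ofReal measurableSet_Ico

lemma S1_meas (u : V) : MeasurableSet (S1 G W d u) := by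
  have h : S1 G W d u = ⋃ w, ⋃ (_ : w ∈ W), {t : ℝ | Jcond G W d (ENNReal.ofReal t) w u} := by
    ext t; simp only [S1, Set.mem_setOf_eq, Set.mem_iUnion, exists_prop]
  rw [h]
  exact MeasurableSet.iUnion fun w => MeasurableSet.iUnion fun _ => Jset_meas w u

lemma S2_meas (u : V) : MeasurableSet (S2 G W d u) := by
  have h : S2 G W d u = ⋃ w, ⋃ w', ⋃ (_ : w ∈ W), ⋃ (_ : w' ∈ W), ⋃ (_ : w ≠ w'),
      ({t : ℝ | Jcond G W d (ENNReal.ofReal t) w u} ∩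
       {t : ℝ | Jcond G W d (ENNReal.ofReal t) w' u}) := by
    ext t
    simp only [S2, Set.mem_setOf_eq, Set.mem_iUnion, Set.mem_inter_iff]
    constructor
    · rintro ⟨w, hw, w', hw', hne, h1, h2⟩; exact ⟨w, w', hw, hw', hne, h1, h2⟩
    · rintro ⟨w, w', hw, hw', hne, h1, h2⟩; exact ⟨w, hw, w', hw', hne, h1, h2⟩
  rw [h]
  exact MeasurableSet.iUnion fun w => MeasurableSet.iUnion fun w' =>
    MeasurableSet.iUnion fun _ => MeasurableSet.iUnion fun _ => MeasurableSet.iUnion fun _ =>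
      (Jset_meas w u).inter (Jset_meas w' u)

lemma DfunR_eq (t : ℝ) (u : V) :
    Dfun G W d (ENNReal.ofReal t) u =
      (S1 G W d u).indicator (fun _ => 2⁻¹) t + (S2 G W d u).indicator (fun _ => 2⁻¹) t := by
  rw [Dfun, Set.indicator_apply, Set.indicator_apply]
  congr 1
  · by_cases h : ∃ w ∈ W, Jcond G W d (ENNReal.ofReal t) w u
    · rw [if_pos h, if_pos (show t ∈ S1 G W d u from h)]
    · rw [if_neg h, if_neg (show t ∉ S1 G W d u from h)]
  · by_cases h : ∃ w ∈ W, ∃ w' ∈ W, w ≠ w' ∧ Jcond G W d (ENNReal.ofReal t) w u ∧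
        Jcond G W d (ENNReal.ofReal t) w' u
    · rw [if_pos h, if_pos (show t ∈ S2 G W d u from h)]
    · rw [if_neg h, if_neg (show t ∉ S2 G W d u from h)]

lemma measurable_DfunR (u : V) :
    Measurable fun t : ℝ => Dfun G W d (ENNReal.ofReal t) u := by
  have h : (fun t : ℝ => Dfun G W d (ENNReal.ofReal t) u) =
      fun t => (S1 G W d u).indicator (fun _ => 2⁻¹) t +
        (S2 G W d u).indicator (fun _ => 2⁻¹) t := funext fun t => DfunR_eq t u
  rw [h]
  exact (measurable_const.indicator (S1_meas u)).add (measurable_const.indicator (S2_meas u))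

lemma ofReal_half : ENNReal.ofReal (2⁻¹ : ℝ) = (2⁻¹ : ℝ≥0∞) := by
  rw [ENNReal.ofReal_inv_of_pos (by norm_num)]
  norm_num

lemma Jvol {w u : V} (hdu1 : d u ≤ 1) (hu : u ∉ W) :
    volume ({t : ℝ | Jcond G W d (ENNReal.ofReal t) w u} ∩ Set.Ioo (0:ℝ) 2⁻¹) ≤ d u := by
  have hdut : d u ≠ ⊤ := ne_top_of_le_ne_top (by norm_num) hdu1
  by_cases hρ : rho G W d w u = ⊤
  · have hempty : {t : ℝ | Jcond G W d (ENNReal.ofReal t) w u} ∩ Set.Ioo (0:ℝ) 2⁻¹ = ∅ := by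
      ext t
      simp only [Set.mem_inter_iff, Set.mem_setOf_eq, Set.mem_empty_iff_false, iff_false]
      rintro ⟨⟨h1, _⟩, _⟩
      rw [hρ, ENNReal.top_sub hdut] at h1
      exact (ENNReal.ofReal_ne_top) (top_le_iff.mp h1)
    rw [hempty]
    simp
  · have haub : rho G W d w u - d u ≠ ⊤ := ne_top_of_le_ne_top hρ tsub_le_self
    have hsub : {t : ℝ | Jcond G W d (ENNReal.ofReal t) w u} ∩ Set.Ioo (0:ℝ) 2⁻¹ ⊆
        Set.Ico (rho G W d w u - d u).toReal (rho G W d w u).toReal := by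
      rintro t ⟨⟨h1, h2⟩, ht0, _⟩
      constructor
      · exact (ENNReal.le_ofReal_iff_toReal_le haub ht0.le).mp h1
      · exact (ENNReal.ofReal_lt_iff_lt_toReal ht0.le hρ).mp h2
    calc volume _ ≤ volume (Set.Ico (rho G W d w u - d u).toReal (rho G W d w u).toReal) :=
          measure_mono hsub
      _ = ENNReal.ofReal ((rho G W d w u).toReal - (rho G W d w u - d u).toReal) :=
          Real.volume_Ico
      _ ≤ d u := by
          have hle : rho G W d w u ≤ (rho G W d w u - d u) + d u :=
            tsub_le_iff_right.mp le_rfl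
          have h1 : (rho G W d w u).toReal ≤ (rho G W d w u - d u).toReal + (d u).toReal := by
            have := ENNReal.toReal_mono (ENNReal.add_ne_top.mpr ⟨haub, hdut⟩) hle
            rwa [ENNReal.toReal_add haub hdut] at this
          calc ENNReal.ofReal ((rho G W d w u).toReal - (rho G W d w u - d u).toReal)
              ≤ ENNReal.ofReal (d u).toReal := ENNReal.ofReal_le_ofReal (by linarith)
            _ = d u := ENNReal.ofReal_toReal hdut

lemma vol_S_bound (hfeas : LPFeasible G W d) (hd1 : ∀ x, d x ≤ 1) {u : V} (hu : u ∉ W) :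
    volume (S1 G W d u ∩ Set.Ioo (0:ℝ) 2⁻¹) + volume (S2 G W d u ∩ Set.Ioo (0:ℝ) 2⁻¹)
      ≤ d u := by
  have hdut : d u ≠ ⊤ := ne_top_of_le_ne_top (by norm_num) (hd1 u)
  have hIub : ∀ t ∈ Set.Ioo (0:ℝ) 2⁻¹, ENNReal.ofReal t < (2⁻¹ : ℝ≥0∞) := by
    intro t ht
    rw [← ofReal_half]
    exact (ENNReal.ofReal_lt_ofReal_iff (by norm_num)).mpr ht.2
  by_cases hcase : ∃ w ∈ W, ∃ w' ∈ W, w ≠ w' ∧ rho G W d w u - d u < 2⁻¹ ∧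
      rho G W d w' u - d u < 2⁻¹
  · -- two close terminals: use the LP constraint
    obtain ⟨w, hw, w', hw', hww', haw, haw'⟩ := hcase
    set WF := Finset.univ.filter (fun x => x ∈ W) with hWF
    have hwWF : w ∈ WF := by simp [hWF, hw]
    have hw'WF : w' ∈ WF := by simp [hWF, hw']
    obtain ⟨w₁, hw₁, hmin₁⟩ := Finset.exists_min_image WF (fun x => rho G W d x u - d u)
      ⟨w, hwWF⟩
    have hex2 : ∃ x ∈ WF.erase w₁, rho G W d x u - d u < 2⁻¹ := by
      rcases eq_or_ne w w₁ with rfl | hne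
      · exact ⟨w', Finset.mem_erase.mpr ⟨Ne.symm hww', hw'WF⟩, haw'⟩
      · exact ⟨w, Finset.mem_erase.mpr ⟨hne, hwWF⟩, haw⟩
    obtain ⟨x0, hx0, hx0lt⟩ := hex2
    obtain ⟨w₂, hw₂, hmin₂⟩ := Finset.exists_min_image (WF.erase w₁)
      (fun x => rho G W d x u - d u) ⟨x0, hx0⟩
    have hw₁W : w₁ ∈ W := by simpa [hWF] using hw₁
    have hw₂W : w₂ ∈ W := by
      have := Finset.mem_of_mem_erase hw₂
      simpa [hWF] using this
    have hne12 : w₁ ≠ w₂ := Ne.symm (Finset.mem_erase.mp hw₂).1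
    have hα₁lt : rho G W d w₁ u - d u < 2⁻¹ :=
      lt_of_le_of_lt (hmin₁ x0 (Finset.mem_of_mem_erase hx0)) hx0lt
    have hα₂lt : rho G W d w₂ u - d u < 2⁻¹ :=
      lt_of_le_of_lt (hmin₂ x0 hx0) hx0lt
    set α₁ := rho G W d w₁ u - d u with hα₁
    set α₂ := rho G W d w₂ u - d u with hα₂
    have hρ₁ : rho G W d w₁ u = α₁ + d u := (tsub_add_cancel_of_le (rho_ge hu)).symm
    have hρ₂ : rho G W d w₂ u = α₂ + d u := (tsub_add_cancel_of_le (rho_ge hu)).symm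
    have hα₁top : α₁ ≠ ⊤ := hα₁lt.ne_top
    have hα₂top : α₂ ≠ ⊤ := hα₂lt.ne_top
    have hρ₁top : rho G W d w₁ u ≠ ⊤ := by
      rw [hρ₁]; exact ENNReal.add_ne_top.mpr ⟨hα₁top, hdut⟩
    have hρ₂top : rho G W d w₂ u ≠ ⊤ := by
      rw [hρ₂]; exact ENNReal.add_ne_top.mpr ⟨hα₂top, hdut⟩
    have hcon := rho_constraint hfeas hw₁W hw₂W hne12 hu hρ₁top hρ₂top
    have hkey : (1 : ℝ≥0∞) ≤ α₁ + α₂ + d u := by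
      rw [hρ₁, hρ₂] at hcon
      have h2 : (1 : ℝ≥0∞) + d u ≤ (α₁ + α₂ + d u) + d u := by
        calc (1:ℝ≥0∞) + d u ≤ (α₁ + d u) + (α₂ + d u) := hcon
          _ = (α₁ + α₂ + d u) + d u := by ring
      exact (WithTop.add_le_add_iff_right hdut).mp h2
    -- real versions
    have hα₁r : α₁.toReal < 2⁻¹ := by
      have := ENNReal.toReal_lt_toReal hα₁top (by norm_num : (2⁻¹:ℝ≥0∞) ≠ ⊤) |>.mpr hα₁lt
      simpa using this
    have hα₂r : α₂.toReal < 2⁻¹ := by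
      have := ENNReal.toReal_lt_toReal hα₂top (by norm_num : (2⁻¹:ℝ≥0∞) ≠ ⊤) |>.mpr hα₂lt
      simpa using this
    have hkeyr : (1:ℝ) ≤ α₁.toReal + α₂.toReal + (d u).toReal := by
      have hsumtop : α₁ + α₂ + d u ≠ ⊤ :=
        ENNReal.add_ne_top.mpr ⟨ENNReal.add_ne_top.mpr ⟨hα₁top, hα₂top⟩, hdut⟩
      have := ENNReal.toReal_mono hsumtop hkey
      rwa [ENNReal.toReal_one, ENNReal.toReal_add (ENNReal.add_ne_top.mpr ⟨hα₁top, hα₂top⟩) hdut,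
        ENNReal.toReal_add hα₁top hα₂top] at this
    have hS1sub : S1 G W d u ∩ Set.Ioo (0:ℝ) 2⁻¹ ⊆ Set.Ico α₁.toReal 2⁻¹ := by
      rintro t ⟨⟨w0, hw0, hJ1, _⟩, ht⟩
      have hle : α₁ ≤ ENNReal.ofReal t :=
        le_trans (hmin₁ w0 (by simp [hWF, hw0])) hJ1
      exact ⟨(ENNReal.le_ofReal_iff_toReal_le hα₁top ht.1.le).mp hle, ht.2⟩
    have hS2sub : S2 G W d u ∩ Set.Ioo (0:ℝ) 2⁻¹ ⊆ Set.Ico α₂.toReal 2⁻¹ := by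
      rintro t ⟨⟨wa, hwa, wb, hwb, hnab, hJa, hJb⟩, ht⟩
      have hle : α₂ ≤ ENNReal.ofReal t := by
        rcases eq_or_ne wa w₁ with rfl | hna
        · exact le_trans (hmin₂ wb (Finset.mem_erase.mpr ⟨Ne.symm hnab, by simp [hWF, hwb]⟩))
            hJb.1
        · exact le_trans (hmin₂ wa (Finset.mem_erase.mpr ⟨hna, by simp [hWF, hwa]⟩)) hJa.1
      exact ⟨(ENNReal.le_ofReal_iff_toReal_le hα₂top ht.1.le).mp hle, ht.2⟩
    calc volume (S1 G W d u ∩ Set.Ioo (0:ℝ) 2⁻¹) + volume (S2 G W d u ∩ Set.Ioo (0:ℝ) 2⁻¹)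
        ≤ volume (Set.Ico α₁.toReal (2⁻¹:ℝ)) + volume (Set.Ico α₂.toReal (2⁻¹:ℝ)) :=
          add_le_add (measure_mono hS1sub) (measure_mono hS2sub)
      _ = ENNReal.ofReal (2⁻¹ - α₁.toReal) + ENNReal.ofReal (2⁻¹ - α₂.toReal) := by
          rw [Real.volume_Ico, Real.volume_Ico]
      _ = ENNReal.ofReal ((2⁻¹ - α₁.toReal) + (2⁻¹ - α₂.toReal)) :=
          (ENNReal.ofReal_add (by linarith) (by linarith)).symm
      _ ≤ ENNReal.ofReal (d u).toReal := ENNReal.ofReal_le_ofReal (by linarith)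
      _ = d u := ENNReal.ofReal_toReal hdut
  · -- at most one close terminal
    have hS2empty : S2 G W d u ∩ Set.Ioo (0:ℝ) 2⁻¹ = ∅ := by
      ext t
      simp only [Set.mem_inter_iff, Set.mem_empty_iff_false, iff_false]
      rintro ⟨⟨w, hw, w', hw', hne, hJ, hJ'⟩, ht⟩
      exact hcase ⟨w, hw, w', hw', hne, lt_of_le_of_lt hJ.1 (hIub t ht),
        lt_of_le_of_lt hJ'.1 (hIub t ht)⟩
    rw [hS2empty, measure_empty, add_zero]
    by_cases hone : ∃ w₀, w₀ ∈ W ∧ rho G W d w₀ u - d u < 2⁻¹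
    · obtain ⟨w₀, hw₀, hw₀lt⟩ := hone
      have hsub : S1 G W d u ∩ Set.Ioo (0:ℝ) 2⁻¹ ⊆
          {t : ℝ | Jcond G W d (ENNReal.ofReal t) w₀ u} ∩ Set.Ioo (0:ℝ) 2⁻¹ := by
        rintro t ⟨⟨w, hw, hJ⟩, ht⟩
        have hwlt : rho G W d w u - d u < 2⁻¹ := lt_of_le_of_lt hJ.1 (hIub t ht)
        rcases eq_or_ne w w₀ with rfl | hne
        · exact ⟨hJ, ht⟩
        · exact absurd ⟨w, hw, w₀, hw₀, hne, hwlt, hw₀lt⟩ hcase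
      exact le_trans (measure_mono hsub) (Jvol (hd1 u) hu)
    · have hS1empty : S1 G W d u ∩ Set.Ioo (0:ℝ) 2⁻¹ = ∅ := by
        ext t
        simp only [Set.mem_inter_iff, Set.mem_empty_iff_false, iff_false]
        rintro ⟨⟨w, hw, hJ⟩, ht⟩
        exact hone ⟨w, hw, lt_of_le_of_lt hJ.1 (hIub t ht)⟩
      rw [hS1empty, measure_empty]
      exact zero_le

end MWC
namespace MWC
open SimpleGraph MeasureTheory

variable {V : Type*} [Fintype V] [DecidableEq V]

lemma integral_Dfun_le {G : SimpleGraph V} {W : Set V} {d : V → ℝ≥0∞}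
    (hfeas : LPFeasible G W d) (hd1 : ∀ x, d x ≤ 1) {u : V} (hu : u ∉ W) :
    ∫⁻ t in Set.Ioo (0:ℝ) 2⁻¹, Dfun G W d (ENNReal.ofReal t) u ≤ d u * 2⁻¹ := by
  calc ∫⁻ t in Set.Ioo (0:ℝ) 2⁻¹, Dfun G W d (ENNReal.ofReal t) u
      = ∫⁻ t in Set.Ioo (0:ℝ) 2⁻¹, ((S1 G W d u).indicator (fun _ => 2⁻¹) t +
          (S2 G W d u).indicator (fun _ => 2⁻¹) t) :=
        lintegral_congr fun t => DfunR_eq t u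
    _ = (∫⁻ t in Set.Ioo (0:ℝ) 2⁻¹, (S1 G W d u).indicator (fun _ => 2⁻¹) t) +
        (∫⁻ t in Set.Ioo (0:ℝ) 2⁻¹, (S2 G W d u).indicator (fun _ => 2⁻¹) t) :=
        lintegral_add_left (measurable_const.indicator (S1_meas u)) _
    _ = 2⁻¹ * volume (S1 G W d u ∩ Set.Ioo (0:ℝ) 2⁻¹) +
        2⁻¹ * volume (S2 G W d u ∩ Set.Ioo (0:ℝ) 2⁻¹) := by
        rw [lintegral_indicator (S1_meas u), lintegral_indicator (S2_meas u),
          setLIntegral_const, setLIntegral_const,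
          Measure.restrict_apply (S1_meas u), Measure.restrict_apply (S2_meas u)]
    _ = (volume (S1 G W d u ∩ Set.Ioo (0:ℝ) 2⁻¹) +
         volume (S2 G W d u ∩ Set.Ioo (0:ℝ) 2⁻¹)) * 2⁻¹ := by ring
    _ ≤ d u * 2⁻¹ := mul_le_mul_left (vol_S_bound hfeas hd1 hu) _

lemma sum_Dfun_nat {G : SimpleGraph V} {W : Set V} {d : V → ℝ≥0∞} (τ : ℝ≥0∞) :
    ∃ m : ℕ, ∑ u ∈ Finset.univ.filter (fun u => u ∉ W), Dfun G W d τ u = (m : ℝ≥0∞) * 2⁻¹ := by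
  have h : ∀ u : V, ∃ k : ℕ, Dfun G W d τ u = (k : ℝ≥0∞) * 2⁻¹ := fun u => by
    obtain ⟨k, _, hk⟩ := Dfun_exists_nat (G := G) (W := W) (d := d) (τ := τ) (u := u)
    exact ⟨k, hk⟩
  choose k hk using h
  refine ⟨∑ u ∈ Finset.univ.filter (fun u => u ∉ W), k u, ?_⟩
  rw [Finset.sum_congr rfl (fun u _ => hk u), ← Finset.sum_mul, Nat.cast_sum]

/-- **Half-integrality of the multiway-cut LP value.** -/
lemma opt_half_integral (G : SimpleGraph V) (W : Set V) (hFeas : ∃ d0, LPFeasible G W d0) :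
    ∃ n : ℕ, OPTlp G W = (n : ℝ≥0∞) * 2⁻¹ := by
  obtain ⟨d₀, hd₀, hd₀opt⟩ := exists_optimal hFeas
  set d : V → ℝ≥0∞ := fun x => if x ∈ W then 0 else min (d₀ x) 1 with hdd
  have hdfeas : LPFeasible G W d := cap_feasible hd₀
  have hdobj : LPObj W d = OPTlp G W := le_antisymm (hd₀opt ▸ cap_obj_le) (opt_le hdfeas)
  have hdW : ∀ x ∈ W, d x = 0 := fun x hx => if_pos hx
  have hd1 : ∀ x, d x ≤ 1 := fun x => by
    rw [hdd]; dsimp only; split_ifs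
    · exact zero_le
    · exact min_le_right _ _
  set K := OPTlp G W with hK
  have hKtop : K ≠ ⊤ := opt_ne_top hFeas
  set NW := Finset.univ.filter (fun u : V => u ∉ W) with hNW
  have hvolI : volume (Set.Ioo (0:ℝ) 2⁻¹) = 2⁻¹ := by
    rw [Real.volume_Ioo, sub_zero, ofReal_half]
  have hint : ∫⁻ t in Set.Ioo (0:ℝ) 2⁻¹,
      (∑ u ∈ NW, Dfun G W d (ENNReal.ofReal t) u) ≤ K * 2⁻¹ := by
    rw [lintegral_finset_sum _ (fun u _ => measurable_DfunR u)]
    calc ∑ u ∈ NW, ∫⁻ t in Set.Ioo (0:ℝ) 2⁻¹, Dfun G W d (ENNReal.ofReal t) u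
        ≤ ∑ u ∈ NW, d u * 2⁻¹ := by
          refine Finset.sum_le_sum fun u hu => ?_
          have huW : u ∉ W := (Finset.mem_filter.mp hu).2
          exact integral_Dfun_le hdfeas hd1 huW
      _ = (∑ u ∈ NW, d u) * 2⁻¹ := (Finset.sum_mul _ _ _).symm
      _ = K * 2⁻¹ := by rw [show ∑ u ∈ NW, d u = LPObj W d from rfl, hdobj]
  have hexists : ∃ t ∈ Set.Ioo (0:ℝ) 2⁻¹,
      (∑ u ∈ NW, Dfun G W d (ENNReal.ofReal t) u) ≤ K := by
    by_contra hcon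
    push_neg at hcon
    set n₀ := Nat.floor ((2 * K).toReal) with hn₀
    have h2K : 2 * K ≠ ⊤ := ENNReal.mul_ne_top (by norm_num) hKtop
    have hc'K : K < ((n₀ + 1 : ℕ) : ℝ≥0∞) * 2⁻¹ := by
      have h1 : (2 * K) < ((n₀ + 1 : ℕ) : ℝ≥0∞) := by
        rw [← ENNReal.ofReal_toReal h2K,
          show ((n₀ + 1 : ℕ) : ℝ≥0∞) = ENNReal.ofReal ((n₀ + 1 : ℕ) : ℝ) from
            (ENNReal.ofReal_natCast _).symm]
        apply ENNReal.ofReal_lt_ofReal_iff (by positivity) |>.mpr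
        push_cast
        exact Nat.lt_floor_add_one _
      calc K = (2 * K) * 2⁻¹ := by
            rw [mul_comm 2 K, mul_assoc, ENNReal.mul_inv_cancel (by norm_num) (by norm_num),
              mul_one]
        _ < ((n₀ + 1 : ℕ) : ℝ≥0∞) * 2⁻¹ :=
            (ENNReal.mul_lt_mul_iff_left (by norm_num) (by norm_num)).mpr h1
    have hlow : ∀ t ∈ Set.Ioo (0:ℝ) 2⁻¹,
        ((n₀ + 1 : ℕ) : ℝ≥0∞) * 2⁻¹ ≤ ∑ u ∈ NW, Dfun G W d (ENNReal.ofReal t) u := by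
      intro t ht
      obtain ⟨m, hm⟩ := sum_Dfun_nat (G := G) (W := W) (d := d) (ENNReal.ofReal t)
      rw [show NW = Finset.univ.filter (fun u : V => u ∉ W) from hNW, hm]
      have hKm : K < (m : ℝ≥0∞) * 2⁻¹ := by
        have := hcon t ht
        rwa [hm] at this
      have h2Km : 2 * K < (m : ℝ≥0∞) := by
        have h3 : K * 2 < ((m : ℝ≥0∞) * 2⁻¹) * 2 :=
          (ENNReal.mul_lt_mul_iff_left (by norm_num) (by norm_num)).mpr hKm
        rwa [mul_assoc, ENNReal.inv_mul_cancel (by norm_num) (by norm_num), mul_one,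
          mul_comm K 2] at h3
      have h4 : (2 * K).toReal < (m : ℝ) := by
        have := (ENNReal.toReal_lt_toReal h2K (ENNReal.natCast_ne_top m)).mpr h2Km
        simpa using this
      have h5 : n₀ < m := (Nat.floor_lt ENNReal.toReal_nonneg).mpr h4
      exact mul_le_mul_left (by exact_mod_cast Nat.succ_le_of_lt h5) _
    have hlb : ((n₀ + 1 : ℕ) : ℝ≥0∞) * 2⁻¹ * volume (Set.Ioo (0:ℝ) 2⁻¹) ≤
        ∫⁻ t in Set.Ioo (0:ℝ) 2⁻¹, ∑ u ∈ NW, Dfun G W d (ENNReal.ofReal t) u := by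
      calc ((n₀ + 1 : ℕ) : ℝ≥0∞) * 2⁻¹ * volume (Set.Ioo (0:ℝ) 2⁻¹)
          = ∫⁻ _ in Set.Ioo (0:ℝ) 2⁻¹, ((n₀ + 1 : ℕ) : ℝ≥0∞) * 2⁻¹ :=
            (setLIntegral_const _ _).symm
        _ ≤ _ := setLIntegral_mono
            (Finset.measurable_sum _ fun u _ => measurable_DfunR u) hlow
    rw [hvolI] at hlb
    have hfin : ((n₀ + 1 : ℕ) : ℝ≥0∞) * 2⁻¹ * 2⁻¹ ≤ K * 2⁻¹ := hlb.trans hint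
    have : ((n₀ + 1 : ℕ) : ℝ≥0∞) * 2⁻¹ ≤ K :=
      (ENNReal.mul_le_mul_iff_left (by norm_num) (by norm_num)).mp hfin
    exact absurd this (not_le.mpr hc'K)
  obtain ⟨t, htI, htle⟩ := hexists
  have hτ : ENNReal.ofReal t < 2⁻¹ := by
    rw [← ofReal_half]
    exact (ENNReal.ofReal_lt_ofReal_iff (by norm_num)).mpr htI.2
  have hfeasD := Dfun_feasible hdfeas hdW hτ
  have hopt : OPTlp G W = ∑ u ∈ NW, Dfun G W d (ENNReal.ofReal t) u := by
    refine le_antisymm ?_ htle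
    exact opt_le hfeasD
  obtain ⟨m, hm⟩ := sum_Dfun_nat (G := G) (W := W) (d := d) (ENNReal.ofReal t)
  refine ⟨m, ?_⟩
  rw [hK, hopt, show NW = Finset.univ.filter (fun u : V => u ∉ W) from hNW, hm]

end MWC
namespace MWC
open SimpleGraph

variable {V : Type*} [Fintype V] [DecidableEq V]

lemma mem_singleton_iff' {v x : V} : x ∈ ({v} : Set V) ↔ x = v := Set.mem_singleton_iff

lemma torso_walk (G : SimpleGraph V) (v : V) {a b : V} (p : G.Walk a b)
    (hp : p.IsPath) (ha : a ≠ v) (hb : b ≠ v) :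
    ∃ q : (torsoGraph G {v}).Walk a b, ∀ x ∈ q.support, x ∈ p.support ∧ x ≠ v := by
  suffices H : ∀ n {a b : V} (p : G.Walk a b), p.length = n → p.IsPath → a ≠ v → b ≠ v →
      ∃ q : (torsoGraph G {v}).Walk a b, ∀ x ∈ q.support, x ∈ p.support ∧ x ≠ v from
    H p.length p rfl hp ha hb
  intro n
  induction n using Nat.strong_induction_on with
  | _ n ih =>
  intro a b p hlen hp ha hb
  cases p with
  | nil =>
    refine ⟨SimpleGraph.Walk.nil, ?_⟩
    intro x hx
    simp only [SimpleGraph.Walk.support_nil, List.mem_singleton] at hx ⊢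
    subst hx
    exact ⟨rfl, ha⟩
  | @cons _ c _ h p' =>
    by_cases hcv : c = v
    · subst hcv
      cases p' with
      | nil => exact absurd rfl hb
      | @cons _ c₂ _ h' p'' =>
        have hp'' : p''.IsPath :=
          ((SimpleGraph.Walk.cons_isPath_iff _ _).mp
            ((SimpleGraph.Walk.cons_isPath_iff _ _).mp hp).1).1
        have hc₂v : c₂ ≠ c := by
          have hnotin : c ∉ p''.support :=
            ((SimpleGraph.Walk.cons_isPath_iff _ _).mp
              ((SimpleGraph.Walk.cons_isPath_iff _ _).mp hp).1).2
          intro hcc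
          exact hnotin (hcc ▸ p''.start_mem_support)
        have hac₂ : a ≠ c₂ := by
          have hnotin : a ∉ (SimpleGraph.Walk.cons h' p'').support :=
            ((SimpleGraph.Walk.cons_isPath_iff _ _).mp hp).2
          intro hac
          apply hnotin
          rw [SimpleGraph.Walk.support_cons]
          exact List.mem_cons_of_mem _ (hac ▸ p''.start_mem_support)
        have hadj : (torsoGraph G {c}).Adj a c₂ := by
          refine ⟨hac₂, by simpa [mem_singleton_iff'] using ha,
            by simpa [mem_singleton_iff'] using hc₂v, ?_⟩
          refine ⟨SimpleGraph.Walk.cons h (SimpleGraph.Walk.cons h' SimpleGraph.Walk.nil), ?_⟩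
          intro x hx
          simp only [SimpleGraph.Walk.support_cons, SimpleGraph.Walk.support_nil,
            List.mem_cons, List.mem_singleton] at hx
          rcases hx with rfl | rfl | rfl | hfalse
          · exact Or.inl rfl
          · exact Or.inr (Or.inr rfl)
          · exact Or.inr (Or.inl rfl)
          · exact absurd hfalse (by simp)
        have hlt : p''.length < n := by
          rw [← hlen]
          simp only [SimpleGraph.Walk.length_cons]
          omega
        obtain ⟨q'', hq''⟩ := ih _ hlt p'' rfl hp'' hc₂v hb
        refine ⟨SimpleGraph.Walk.cons hadj q'', ?_⟩
        intro x hx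
        rw [SimpleGraph.Walk.support_cons, List.mem_cons] at hx
        rcases hx with rfl | hx
        · exact ⟨SimpleGraph.Walk.start_mem_support _, ha⟩
        · obtain ⟨hx1, hx2⟩ := hq'' x hx
          refine ⟨?_, hx2⟩
          rw [SimpleGraph.Walk.support_cons, SimpleGraph.Walk.support_cons]
          exact List.mem_cons_of_mem _ (List.mem_cons_of_mem _ hx1)
    · have hp' : p'.IsPath := ((SimpleGraph.Walk.cons_isPath_iff _ _).mp hp).1
      have hadj : (torsoGraph G {v}).Adj a c := by
        refine ⟨G.ne_of_adj h, by simpa [mem_singleton_iff'] using ha,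
          by simpa [mem_singleton_iff'] using hcv, ?_⟩
        refine ⟨SimpleGraph.Walk.cons h SimpleGraph.Walk.nil, ?_⟩
        intro x hx
        simp only [SimpleGraph.Walk.support_cons, SimpleGraph.Walk.support_nil,
          List.mem_cons, List.mem_singleton] at hx
        rcases hx with rfl | rfl | hfalse
        · exact Or.inl rfl
        · exact Or.inr (Or.inl rfl)
        · exact absurd hfalse (by simp)
      have hlt : p'.length < n := by
        rw [← hlen]; simp only [SimpleGraph.Walk.length_cons]; omega
      obtain ⟨q', hq'⟩ := ih _ hlt p' rfl hp' hcv hb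
      refine ⟨SimpleGraph.Walk.cons hadj q', ?_⟩
      intro x hx
      rw [SimpleGraph.Walk.support_cons, List.mem_cons] at hx
      rcases hx with rfl | hx
      · exact ⟨SimpleGraph.Walk.start_mem_support _, ha⟩
      · obtain ⟨hx1, hx2⟩ := hq' x hx
        exact ⟨by rw [SimpleGraph.Walk.support_cons]; exact List.mem_cons_of_mem _ hx1, hx2⟩

lemma contract_walk (G : SimpleGraph V) (v w : V) {a b : V} (p : G.Walk a b) :
    ∃ q : (contractGraph G {v} (fun _ => w)).Walk
        (fStar {v} (fun _ => w) a) (fStar {v} (fun _ => w) b),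
      ∀ x ∈ q.support, ∃ y ∈ p.support, x = fStar {v} (fun _ => w) y := by
  induction p with
  | nil =>
    refine ⟨SimpleGraph.Walk.nil, ?_⟩
    intro x hx
    simp only [SimpleGraph.Walk.support_nil, List.mem_singleton] at hx
    exact ⟨_, by simp, hx⟩
  | @cons a c b h p' ih =>
    obtain ⟨q', hq'⟩ := ih
    by_cases he : fStar {v} (fun _ => w) a = fStar {v} (fun _ => w) c
    · refine ⟨q'.copy he.symm rfl, ?_⟩
      intro x hx
      rw [SimpleGraph.Walk.support_copy] at hx
      obtain ⟨y, hy, hxy⟩ := hq' x hx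
      exact ⟨y, by rw [SimpleGraph.Walk.support_cons]; exact List.mem_cons_of_mem _ hy, hxy⟩
    · have hadj : (contractGraph G {v} (fun _ => w)).Adj
          (fStar {v} (fun _ => w) a) (fStar {v} (fun _ => w) c) :=
        ⟨he, a, c, h, rfl, rfl⟩
      refine ⟨SimpleGraph.Walk.cons hadj q', ?_⟩
      intro x hx
      rw [SimpleGraph.Walk.support_cons, List.mem_cons] at hx
      rcases hx with rfl | hx
      · exact ⟨a, SimpleGraph.Walk.start_mem_support _, rfl⟩
      · obtain ⟨y, hy, hxy⟩ := hq' x hx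
        exact ⟨y, by rw [SimpleGraph.Walk.support_cons]; exact List.mem_cons_of_mem _ hy, hxy⟩

lemma fStar_of_ne {v w x : V} (hx : x ≠ v) : fStar {v} (fun _ => w) x = x := by
  rw [fStar, if_neg (by simpa [mem_singleton_iff'] using hx)]

lemma fStar_self {v w : V} : fStar {v} (fun _ => w) v = w := by
  rw [fStar, if_pos (by simp)]

end MWC
namespace MWC
open SimpleGraph

variable {V : Type*} [Fintype V] [DecidableEq V]

lemma contract_le (G : SimpleGraph V) (W : Set V) {v w : V} (hv : v ∉ W) (hw : w ∈ W) :
    OPTlp G W ≤ OPTlp (contractGraph G {v} (fun _ => w)) W := by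
  apply le_opt
  intro d' hd'
  set dd : V → ℝ≥0∞ := fun x => if x = v then 0 else d' x with hdd
  have hfeas : LPFeasible G W dd := by
    intro P
    have hav : P.a ≠ v := fun h => hv (h ▸ P.ha)
    have hbv : P.b ≠ v := fun h => hv (h ▸ P.hb)
    obtain ⟨q, hq⟩ := contract_walk G v w P.walk
    obtain ⟨q2, hq2sup⟩ : ∃ q2 : (contractGraph G {v} fun _ => w).Walk P.a P.b,
        ∀ x ∈ q2.support, ∃ y ∈ P.walk.support, x = fStar {v} (fun _ => w) y := by
      refine ⟨q.copy (fStar_of_ne hav) (fStar_of_ne hbv), ?_⟩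
      intro x hx
      rw [SimpleGraph.Walk.support_copy] at hx
      exact hq x hx
    have h1 : 1 ≤ psum W d' q2.bypass :=
      hd' ⟨P.a, P.b, P.ha, P.hb, P.hne, q2.bypass, q2.bypass_isPath⟩
    have hkey : ∀ x ∈ Finset.univ.filter (fun x => x ∈ q2.bypass.support ∧ x ∉ W),
        x ∈ P.walk.support ∧ x ≠ v := by
      intro x hx
      rw [Finset.mem_filter] at hx
      obtain ⟨y, hy, hxy⟩ := hq2sup x (q2.support_bypass_subset hx.2.1)
      rcases eq_or_ne y v with rfl | hyv
      · rw [hxy, fStar_self] at hx ⊢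
        exact absurd hw hx.2.2
      · rw [hxy, fStar_of_ne hyv]
        exact ⟨hy, hyv⟩
    calc (1:ℝ≥0∞) ≤ psum W d' q2.bypass := h1
      _ = ∑ x ∈ Finset.univ.filter (fun x => x ∈ q2.bypass.support ∧ x ∉ W), dd x := by
          refine Finset.sum_congr rfl fun x hx => ?_
          rw [hdd]; dsimp only; rw [if_neg (hkey x hx).2]
      _ ≤ psum W dd P.walk := by
          apply Finset.sum_le_sum_of_subset
          intro x hx
          have h := hkey x hx
          rw [Finset.mem_filter] at hx ⊢
          exact ⟨hx.1, h.1, hx.2.2⟩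
  have hobj : LPObj W dd ≤ LPObj W d' := by
    apply Finset.sum_le_sum
    intro x _
    rw [hdd]; dsimp only
    split_ifs
    · exact zero_le
    · exact le_rfl
  exact (opt_le hfeas).trans hobj

lemma torso_ge (G : SimpleGraph V) (W : Set V) (hFeas : ∃ d, LPFeasible G W d) {v : V}
    (hnz : NonZeroVertex G W v) :
    OPTlp G W + 1 / 2 ≤ OPTlp (torsoGraph G {v}) W := by
  obtain ⟨hvW, hnzd⟩ := hnz
  by_cases hT : OPTlp (torsoGraph G {v}) W = ⊤
  · rw [hT]; exact le_top
  have hfeas' : ∃ d, LPFeasible (torsoGraph G {v}) W d := feasible_of_opt_ne_top hT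
  obtain ⟨d', hd', hd'opt⟩ := exists_optimal hfeas'
  set dd : V → ℝ≥0∞ := fun x => if x = v then 0 else d' x with hdd
  have hfeasdd : LPFeasible G W dd := by
    intro P
    have hav : P.a ≠ v := fun h => hvW (h ▸ P.ha)
    have hbv : P.b ≠ v := fun h => hvW (h ▸ P.hb)
    obtain ⟨q, hq⟩ := torso_walk G v P.walk P.ispath hav hbv
    have h1 : 1 ≤ psum W d' q.bypass :=
      hd' ⟨P.a, P.b, P.ha, P.hb, P.hne, q.bypass, q.bypass_isPath⟩
    have hkey : ∀ x ∈ Finset.univ.filter (fun x => x ∈ q.bypass.support ∧ x ∉ W),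
        x ∈ P.walk.support ∧ x ≠ v := fun x hx =>
      hq x (q.support_bypass_subset (Finset.mem_filter.mp hx).2.1)
    calc (1:ℝ≥0∞) ≤ psum W d' q.bypass := h1
      _ = ∑ x ∈ Finset.univ.filter (fun x => x ∈ q.bypass.support ∧ x ∉ W), dd x := by
          refine Finset.sum_congr rfl fun x hx => ?_
          rw [hdd]; dsimp only; rw [if_neg (hkey x hx).2]
      _ ≤ psum W dd P.walk := by
          apply Finset.sum_le_sum_of_subset
          intro x hx
          have h := hkey x hx
          rw [Finset.mem_filter] at hx ⊢
          exact ⟨hx.1, h.1, hx.2.2⟩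
  have hobj : LPObj W dd ≤ LPObj W d' := by
    apply Finset.sum_le_sum
    intro x _
    rw [hdd]; dsimp only
    split_ifs
    · exact zero_le
    · exact le_rfl
  have hle : OPTlp G W ≤ LPObj W dd := opt_le hfeasdd
  obtain ⟨n, hn⟩ := opt_half_integral G W hFeas
  obtain ⟨n', hn'⟩ := opt_half_integral (torsoGraph G {v}) W hfeas'
  by_contra hcon
  push_neg at hcon
  have hOPT'le : OPTlp (torsoGraph G {v}) W ≤ OPTlp G W := by
    have hlt : (n' : ℝ≥0∞) * 2⁻¹ < ((n + 1 : ℕ) : ℝ≥0∞) * 2⁻¹ := by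
      rw [← hn']
      calc OPTlp (torsoGraph G {v}) W < OPTlp G W + 1 / 2 := hcon
        _ = ((n + 1 : ℕ) : ℝ≥0∞) * 2⁻¹ := by
            rw [hn]
            push_cast
            rw [add_mul, one_mul, one_div]
    have hn'n : n' < n + 1 := by
      exact_mod_cast (ENNReal.mul_lt_mul_iff_left (by norm_num) (by norm_num)).mp hlt
    rw [hn, hn']
    exact mul_le_mul_left (by exact_mod_cast Nat.lt_succ_iff.mp hn'n) _
  have hopt_dd : LPObj W dd = OPTlp G W :=
    le_antisymm (hobj.trans (hd'opt ▸ hOPT'le)) hle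
  exact hnzd dd ⟨hfeasdd, hopt_dd⟩ (by rw [hdd]; simp)

end MWC

/-- If the multiway-cut LP for `(G,W)` is feasible, then (1) taking the
torso at a non-zero vertex `v` increases the LP optimum by at least `1/2`, and (2)
contracting any vertex `v ∉ W` into a vertex `w ∈ W` does not decrease the LP optimum. -/
theorem optlp_torso_and_contract
    (G : SimpleGraph V) (W : Set V) (hFeas : ∃ d, LPFeasible G W d) :
    (∀ v, NonZeroVertex G W v →
      OPTlp G W + 1 / 2 ≤ OPTlp (torsoGraph G {v}) W) ∧
    (∀ v, v ∉ W → ∀ w ∈ W,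
      OPTlp G W ≤ OPTlp (contractGraph G {v} (fun _ => w)) W) := by
  constructor
  · intro v hnz
    exact MWC.torso_ge G W hFeas hnz
  · intro v hv w hw
    exact MWC.contract_le G W hv hw
end
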